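/- Let $A \subset \mathbb{N}_0^d$ be finite with $0 \in A$, let $\mathcal{X} \subset [0,\infty)^d$ contain $0$, and let $X_n = \{x_1, \dots, x_n\} \subset \mathcal{X}$ be $\mathcal{P}_A$-unisolvent. For every $h \in (0,1]$ there exists a vector $\tilde{u}^{(h)} \in \mathbb{R}^n$ such that (1) $\sum_{i=1}^n \tilde{u}_i^{(h)} p(h x_i) = p(0)$ for all $p \in \mathcal{P}_A$, and (2) $\sum_{i=1}^n |\tilde{u}_i^{(h)}| \le C_{A,X_n}$ for a constant $C_{A,X_n}$ independent of $h$. -/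
import Mathlib


open scoped BigOperators
open scoped Matrix

noncomputable def mono {d : ℕ} (α : Fin d → ℕ) (x : Fin d → ℝ) : ℝ := ∏ i, x i ^ α i

noncomputable def polyA {d m : ℕ} (A : Fin m → Fin d → ℕ) (c : Fin m → ℝ)
    (x : Fin d → ℝ) : ℝ := ∑ j, c j * mono (A j) x

/-- Sparse polynomial reproduction at the origin with uniformly bounded weights. -/
theorem stmt4 {d n m : ℕ} (A : Fin m → Fin d → ℕ) (hA : Function.Injective A)
    (j0 : Fin m) (hj0 : A j0 = 0)
    (𝒳 : Set (Fin d → ℝ)) (h𝒳 : ∀ x ∈ 𝒳, ∀ k, 0 ≤ x k)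
    (h0 : (0 : Fin d → ℝ) ∈ 𝒳)
    (X : Fin n → Fin d → ℝ) (hX : ∀ i, X i ∈ 𝒳)
    (hU : Function.Injective fun c : Fin m → ℝ =>
      (Matrix.of fun i j => mono (A j) (X i)).mulVec c) :
    ∃ C : ℝ, ∀ h : ℝ, h ∈ Set.Ioc (0 : ℝ) 1 →
      ∃ u : Fin n → ℝ,
        (∀ c : Fin m → ℝ, ∑ i, u i * polyA A c (h • X i) = polyA A c 0) ∧
        ∑ i, |u i| ≤ C := by
  classical
  set V : Matrix (Fin n) (Fin m) ℝ := Matrix.of fun i j => mono (A j) (X i) with hV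
  -- `Vᵀ * V` is injective, hence a unit
  have hinj : Function.Injective (Vᵀ * V).mulVec := by
    intro x y hxy
    have hker := Matrix.ker_mulVecLin_transpose_mul_self V
    have hxy' : V.mulVec (x - y) = 0 := by
      have hmem : (x - y) ∈ LinearMap.ker (Vᵀ * V).mulVecLin := by
        simp only [LinearMap.mem_ker, Matrix.mulVecLin_apply, Matrix.mulVec_sub]
        rw [show (Vᵀ * V).mulVec x = (Vᵀ * V).mulVec y from hxy]
        simp
      rw [hker] at hmem
      simpa using hmem
    have : V.mulVec (x - y) = V.mulVec 0 := by simpa using hxy'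
    have := hU this
    exact sub_eq_zero.mp (by simpa using this)
  have hunit : IsUnit (Vᵀ * V) := Matrix.mulVec_injective_iff_isUnit.mp hinj
  obtain ⟨w, hw⟩ := (Matrix.mulVec_surjective_iff_isUnit.mpr hunit) (Pi.single j0 (1 : ℝ))
  set u : Fin n → ℝ := V.mulVec w with hu
  have hVu : ∀ j, ∑ i, u i * V i j = if j = j0 then 1 else 0 := by
    intro j
    have heq : Vᵀ.mulVec u = Pi.single j0 (1 : ℝ) := by
      rw [hu, Matrix.mulVec_mulVec, hw]
    have h1 : (Vᵀ.mulVec u) j = (if j = j0 then (1 : ℝ) else 0) := by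
      rw [heq, Pi.single_apply]
    rw [← h1]
    simp [Matrix.mulVec, dotProduct, mul_comm]
  refine ⟨∑ i, |u i|, fun h hh => ⟨u, ?_, le_refl _⟩⟩
  intro c
  -- scaling of monomials
  have hmono : ∀ j i, mono (A j) (h • X i) = (∏ k, h ^ A j k) * mono (A j) (X i) := by
    intro j i
    simp only [mono, Pi.smul_apply, smul_eq_mul, mul_pow]
    rw [Finset.prod_mul_distrib]
  have hRHS : polyA A c 0 = c j0 := by
    rw [polyA]
    rw [Finset.sum_eq_single j0]
    · simp [mono, hj0]
    · intro j _ hj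
      have hAj : A j ≠ 0 := fun hz => hj (hA (hz.trans hj0.symm))
      obtain ⟨k, hk⟩ : ∃ k, A j k ≠ 0 := by
        by_contra hc
        push_neg at hc
        exact hAj (funext fun k => hc k)
      have : mono (A j) 0 = 0 := by
        rw [mono]
        exact Finset.prod_eq_zero (Finset.mem_univ k) (by simp [zero_pow hk])
      simp [this]
    · simp
  rw [hRHS]
  calc ∑ i, u i * polyA A c (h • X i)
      = ∑ i, ∑ j, u i * (c j * ((∏ k, h ^ A j k) * V i j)) := by
        simp only [polyA, Finset.mul_sum]
        refine Finset.sum_congr rfl fun i _ => Finset.sum_congr rfl fun j _ => ?_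
        rw [hmono j i]; rfl
    _ = ∑ j, ∑ i, u i * (c j * ((∏ k, h ^ A j k) * V i j)) := Finset.sum_comm
    _ = ∑ j, c j * (∏ k, h ^ A j k) * ∑ i, u i * V i j := by
        refine Finset.sum_congr rfl fun j _ => ?_
        rw [Finset.mul_sum]
        refine Finset.sum_congr rfl fun i _ => by ring
    _ = c j0 := by
        rw [Finset.sum_eq_single j0]
        · rw [hVu j0]; simp [hj0]
        · intro j _ hj; rw [hVu j]; simp [hj]
        · simp
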